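/- Let q̂ be a probability vector on the finite alphabet 𝒳, let s be a probability measure on the nonnegative integers with mean z = Σ_n n s(n) > 0, and for each n ≥ 1 let v_n be a probability measure on 𝒳ⁿ with marginals v_{n,1},…,v_{n,n}. Then Σ_{n=1}^∞ s(n) H(v_n ‖ q̂ⁿ) ≥ Σ_{n=1}^∞ s(n) Σ_{i=1}^n H(v_{n,i} ‖ q̂) ≥ z H( z^{-1} Σ_{n=1}^∞ s(n) Σ_{i=1}^n v_{n,i} ‖ q̂ ), with equality throughout whenever v_n = ∏_{i=1}^n v_{n,i} with all v_{n,i} equal to a single probability measure independent of n and i. -/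

import Mathlib

open scoped ENNReal NNReal Classical
open Filter

namespace GWLD

/-! ### The space `𝒳* = ⋃ₙ {n} × 𝒳ⁿ` of offspring configurations -/

/-- `𝒳* = ⋃ₙ {n} × 𝒳ⁿ`, with the discrete topology (it is a countable type). -/
abbrev XStar (𝒳 : Type) : Type := Σ n : ℕ, Fin n → 𝒳

/-- the multiplicity `m(b,c)` of the symbol `b` in `c = (n, a₁, …, aₙ)`. -/
noncomputable def mult {𝒳 : Type} (b : 𝒳) (c : XStar 𝒳) : ℕ :=
  (Finset.univ.filter fun i : Fin c.1 => c.2 i = b).card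

/-! ### Finite rooted planar typed trees -/

/-- A finite rooted planar tree, each vertex carrying a type from `𝒳`. -/
inductive TypedTree (𝒳 : Type) where
  | node : 𝒳 → List (TypedTree 𝒳) → TypedTree 𝒳

namespace TypedTree

variable {𝒳 : Type}

/-- the type of the root. -/
def rootType : TypedTree 𝒳 → 𝒳
  | node a _ => a

mutual
  /-- the number `|T|` of vertices of the tree. -/
  def size : TypedTree 𝒳 → ℕ
    | node _ ts => 1 + sizeList ts
  def sizeList : List (TypedTree 𝒳) → ℕ
    | [] => 0
    | t :: ts => size t + sizeList ts
end

/-- the element of `𝒳*` recording the number and types of the roots of a list of trees;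
`spec ts = C(v)` when `ts` is the list of subtrees hanging off the vertex `v`. -/
def spec (ts : List (TypedTree 𝒳)) : XStar 𝒳 :=
  ⟨ts.length, fun i => rootType (ts.get i)⟩

mutual
  /-- `offCount t (a,c) = #{v ∈ V : (X(v), C(v)) = (a,c)}`. -/
  noncomputable def offCount : TypedTree 𝒳 → 𝒳 × XStar 𝒳 → ℕ
    | node a ts, p => (if p = (a, spec ts) then 1 else 0) + offCountList ts p
  noncomputable def offCountList : List (TypedTree 𝒳) → 𝒳 × XStar 𝒳 → ℕ
    | [], _ => 0
    | t :: ts, p => offCount t p + offCountList ts p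
end

mutual
  /-- `pairCount t (a,b) = #{e ∈ E : (X(e₁), X(e₂)) = (a,b)}`. -/
  noncomputable def pairCount : TypedTree 𝒳 → 𝒳 × 𝒳 → ℕ
    | node a ts, p =>
        (ts.map fun s => if p = (a, rootType s) then 1 else 0).sum + pairCountList ts p
  noncomputable def pairCountList : List (TypedTree 𝒳) → 𝒳 × 𝒳 → ℕ
    | [], _ => 0
    | t :: ts, p => pairCount t p + pairCountList ts p
end

mutual
  /-- `∏_{v ∈ V} ℚ{C(v) | X(v)}`. -/
  noncomputable def treeWeight (Q : 𝒳 → XStar 𝒳 → ℝ) : TypedTree 𝒳 → ℝ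
    | node a ts => Q a (spec ts) * treeWeightList Q ts
  noncomputable def treeWeightList (Q : 𝒳 → XStar 𝒳 → ℝ) : List (TypedTree 𝒳) → ℝ
    | [] => 1
    | t :: ts => treeWeight Q t * treeWeightList Q ts
end

end TypedTree

open TypedTree

variable {𝒳 : Type}

/-! ### Empirical measures -/

/-- the empirical offspring measure `M_X`. -/
noncomputable def MX (t : TypedTree 𝒳) : 𝒳 × XStar 𝒳 → ℝ :=
  fun p => (offCount t p : ℝ) / (size t : ℝ)

/-- the empirical pair measure `L̃_X` (normalised by the number of vertices). -/
noncomputable def LtX (t : TypedTree 𝒳) : 𝒳 × 𝒳 → ℝ :=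
  fun p => (pairCount t p : ℝ) / (size t : ℝ)

/-- the empirical pair measure `L_X` (normalised by the number `|T| - 1` of edges). -/
noncomputable def LX (t : TypedTree 𝒳) : 𝒳 × 𝒳 → ℝ :=
  fun p => (pairCount t p : ℝ) / ((size t : ℝ) - 1)

/-! ### The law of a multitype Galton-Watson tree and conditioning on the total size -/

/-- the probability that the multitype Galton-Watson tree with initial law `μ` and
offspring kernel `Q` produces exactly the typed tree `t`. -/
noncomputable def gwLaw (μ : 𝒳 → ℝ) (Q : 𝒳 → XStar 𝒳 → ℝ) (t : TypedTree 𝒳) : ℝ :=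
  μ (rootType t) * treeWeight Q t

/-- `P{|T| = n}`. -/
noncomputable def partSum (μ : 𝒳 → ℝ) (Q : 𝒳 → XStar 𝒳 → ℝ) (n : ℕ) : ℝ :=
  ∑' t : TypedTree 𝒳, if size t = n then gwLaw μ Q t else 0

/-- `P{X ∈ A | |T| = n}`. -/
noncomputable def condProb (μ : 𝒳 → ℝ) (Q : 𝒳 → XStar 𝒳 → ℝ)
    (A : Set (TypedTree 𝒳)) (n : ℕ) : ℝ :=
  (∑' t : TypedTree 𝒳, if size t = n ∧ t ∈ A then gwLaw μ Q t else 0) / partSum μ Q n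

/-- `n → ∞` along those `n` for which `P{|T| = n} > 0`. -/
noncomputable def condFilter (μ : 𝒳 → ℝ) (Q : 𝒳 → XStar 𝒳 → ℝ) : Filter ℕ :=
  Filter.atTop ⊓ Filter.principal {n : ℕ | 0 < partSum μ Q n}

/-! ### Large deviation principles -/

/-- extended logarithm, `elog x = -∞` for `x ≤ 0`. -/
noncomputable def elog (x : ℝ) : EReal := if x ≤ 0 then (⊥ : EReal) else ((Real.log x : ℝ) : EReal)

/-- A family `P n` of (conditional) probabilities on a topological space `S` satisfies a
large deviation principle with speed `n`, along the filter `L`, with rate function `I`. -/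
def HasLDP {S : Type*} [TopologicalSpace S] (P : ℕ → Set S → ℝ) (L : Filter ℕ)
    (I : S → ℝ≥0∞) : Prop :=
  (∀ F : Set S, IsClosed F →
      Filter.limsup (fun n : ℕ => (((n : ℝ)⁻¹ : ℝ) : EReal) * elog (P n F)) L
        ≤ -(⨅ x ∈ F, (I x : EReal))) ∧
  (∀ G : Set S, IsOpen G →
      -(⨅ x ∈ G, (I x : EReal))
        ≤ Filter.liminf (fun n : ℕ => (((n : ℝ)⁻¹ : ℝ) : EReal) * elog (P n G)) L)

/-- a good rate function: lower semicontinuous with compact sublevel sets. -/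
def IsGoodRate {S : Type*} [TopologicalSpace S] (I : S → ℝ≥0∞) : Prop :=
  LowerSemicontinuous I ∧ ∀ c : ℝ≥0∞, c ≠ ⊤ → IsCompact {x : S | I x ≤ c}

/-! ### Relative entropy -/

/-- relative entropy `H(ν ‖ μ)` of two (probability) mass functions on a countable set,
written via `φ(x) = x log x - x + 1` so that all summands are nonnegative. -/
noncomputable def relEnt {α : Type*} (ν μ : α → ℝ) : ℝ≥0∞ :=
  if ∀ x, μ x = 0 → ν x = 0 then
    ∑' x, ENNReal.ofReal (ν x * Real.log (ν x / μ x) - ν x + μ x)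
  else ⊤

/-! ### Probability vectors and offspring kernels -/

/-- a probability mass function. -/
def IsProbVec {α : Type*} (μ : α → ℝ) : Prop := (∀ a, 0 ≤ μ a) ∧ HasSum μ 1

/-- an offspring transition kernel from `𝒳` to `𝒳*`. -/
def IsKernel (Q : 𝒳 → XStar 𝒳 → ℝ) : Prop :=
  (∀ a c, 0 ≤ Q a c) ∧ ∀ a, HasSum (Q a) 1

/-- the offspring numbers have finite second moment under `Q{·|a}` for every `a`. -/
def FiniteSecondMoment (Q : 𝒳 → XStar 𝒳 → ℝ) : Prop :=
  ∀ a, Summable fun c : XStar 𝒳 => ((c.1 : ℝ)) ^ 2 * Q a c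

/-! ### The mean matrix, weak irreducibility and criticality -/

/-- the mean matrix `A(a,b) = Σ_c ℚ{c|b} m(a,c)`, valued in `[0,∞]`. -/
noncomputable def AmatE [Fintype 𝒳] (Q : 𝒳 → XStar 𝒳 → ℝ) : Matrix 𝒳 𝒳 ℝ≥0∞ :=
  Matrix.of fun a b => ∑' c : XStar 𝒳, (mult a c : ℝ≥0∞) * ENNReal.ofReal (Q b c)

/-- `A*(a,b) = Σ_{k ≥ 1} A^k(a,b) ∈ [0,∞]`. -/
noncomputable def Astar [Fintype 𝒳] [DecidableEq 𝒳] (Q : 𝒳 → XStar 𝒳 → ℝ) (a b : 𝒳) : ℝ≥0∞ :=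
  ∑' k : ℕ, (AmatE Q ^ (k + 1)) a b

/-- the multitype Galton-Watson tree with offspring kernel `Q` is weakly irreducible:
`𝒳` splits into recurrent and transient states as prescribed, and the number of
transient offspring is uniformly bounded under `Q`. -/
def WeaklyIrreducibleGW [Fintype 𝒳] [DecidableEq 𝒳] (Q : 𝒳 → XStar 𝒳 → ℝ) : Prop :=
  ∃ Xr Xt : Set 𝒳, Xr.Nonempty ∧ Disjoint Xr Xt ∧ Xr ∪ Xt = Set.univ ∧
    (∀ a b, b ∈ Xr → 0 < Astar Q a b) ∧
    (∀ a b, b ∈ Xt → (a = b ∨ a ∈ Xr) → Astar Q a b = 0) ∧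
    ∃ C : ℕ, ∀ a c, Q a c ≠ 0 → (∑ b : 𝒳, if b ∈ Xt then mult b c else 0) ≤ C

/-- the mean matrix as a real matrix (meaningful when the entries are finite). -/
noncomputable def Amat [Fintype 𝒳] (Q : 𝒳 → XStar 𝒳 → ℝ) : Matrix 𝒳 𝒳 ℝ :=
  Matrix.of fun a b => ∑' c : XStar 𝒳, (mult a c : ℝ) * Q b c

/-- `r` is the Perron-Frobenius eigenvalue of the nonnegative matrix `M` : it is an
eigenvalue with a nonnegative eigenvector dominating the modulus of every eigenvalue. -/
def IsPerronRoot [Fintype 𝒳] [DecidableEq 𝒳] (M : Matrix 𝒳 𝒳 ℝ) (r : ℝ) : Prop :=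
  (∃ v : 𝒳 → ℝ, v ≠ 0 ∧ (∀ a, 0 ≤ v a) ∧ M.mulVec v = r • v) ∧
  ∀ z : ℂ, (M.map (algebraMap ℝ ℂ)).charpoly.IsRoot z → ‖z‖ ≤ r

/-- criticality: the Perron-Frobenius eigenvalue of the mean matrix is `1`. -/
def CriticalGW [Fintype 𝒳] [DecidableEq 𝒳] (Q : 𝒳 → XStar 𝒳 → ℝ) : Prop :=
  IsPerronRoot (Amat Q) 1

/-! ### Spaces of measures (weak topology = topology of pointwise convergence) -/

/-- `ℳ̃(𝒳×𝒳)`: finite (nonnegative) measures on `𝒳 × 𝒳`. -/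
def Mpair (𝒳 : Type) : Set ((𝒳 × 𝒳) → ℝ) := {ϖ | ∀ p, 0 ≤ ϖ p}

/-- `ℳ(𝒳×𝒳*)`: probability measures `ν` on `𝒳 × 𝒳*` with `∫ n dν < ∞`. -/
def Mstar (𝒳 : Type) : Set ((𝒳 × XStar 𝒳) → ℝ) :=
  {ν | (∀ p, 0 ≤ ν p) ∧ HasSum ν 1 ∧ Summable fun p : 𝒳 × XStar 𝒳 => (p.2.1 : ℝ) * ν p}

/-- `ℳ(𝒳×𝒳_k*)`: probability measures on `𝒳 × 𝒳*` carried by `𝒳 × 𝒳_k*`. -/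
def MstarK (𝒳 : Type) (k : ℕ) : Set ((𝒳 × XStar 𝒳) → ℝ) :=
  {ν | ν ∈ Mstar 𝒳 ∧ ∀ p : 𝒳 × XStar 𝒳, k < p.2.1 → ν p = 0}

/-- `ℳ(𝒳×𝒳)` as probability measures: the empirical pair measure lives here. -/
def Mprob2 (𝒳 : Type) [Fintype 𝒳] : Set ((𝒳 × 𝒳) → ℝ) :=
  {μ | (∀ p, 0 ≤ μ p) ∧ ∑ p : 𝒳 × 𝒳, μ p = 1}

/-- the `𝒳`-marginal `ν₁` of a measure on `𝒳 × 𝒳*`. -/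
noncomputable def nu1 (ν : (𝒳 × XStar 𝒳) → ℝ) : 𝒳 → ℝ := fun a => ∑' c : XStar 𝒳, ν (a, c)

/-- the second marginal `ϖ₂` of a measure on `𝒳 × 𝒳`. -/
noncomputable def pi2 [Fintype 𝒳] (ϖ : (𝒳 × 𝒳) → ℝ) : 𝒳 → ℝ := fun b => ∑ a : 𝒳, ϖ (a, b)

/-- `(ϖ, ν)` is sub-consistent: `ϖ(a,b) ≥ Σ_c m(b,c) ν(a,c)` for all `a, b`. -/
def SubConsistent (ϖ : (𝒳 × 𝒳) → ℝ) (ν : (𝒳 × XStar 𝒳) → ℝ) : Prop :=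
  ∀ a b : 𝒳, (∑' c : XStar 𝒳, (mult b c : ℝ) * ν (a, c)) ≤ ϖ (a, b)

/-- `(ϖ, ν)` is consistent: `ϖ(a,b) = Σ_c m(b,c) ν(a,c)` for all `a, b`. -/
def Consistent (ϖ : (𝒳 × 𝒳) → ℝ) (ν : (𝒳 × XStar 𝒳) → ℝ) : Prop :=
  ∀ a b : 𝒳, (∑' c : XStar 𝒳, (mult b c : ℝ) * ν (a, c)) = ϖ (a, b)

/-- the measure `ν₁ ⊗ ℚ (a,c) = ν₁(a) ℚ{c|a}` on `𝒳 × 𝒳*`. -/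
noncomputable def prodQ (ν1f : 𝒳 → ℝ) (Q : 𝒳 → XStar 𝒳 → ℝ) : (𝒳 × XStar 𝒳) → ℝ :=
  fun p => ν1f p.1 * Q p.1 p.2

/-! ### The rate functions -/

/-- the rate function `J` of Theorem 2.1. -/
noncomputable def Jrate [Fintype 𝒳] (Q : 𝒳 → XStar 𝒳 → ℝ)
    (ϖ : (𝒳 × 𝒳) → ℝ) (ν : (𝒳 × XStar 𝒳) → ℝ) : ℝ≥0∞ :=
  if SubConsistent ϖ ν ∧ pi2 ϖ = nu1 ν then relEnt ν (prodQ (nu1 ν) Q) else ⊤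

/-- the rate function `J_k` of Theorem 2.3 (consistency instead of sub-consistency). -/
noncomputable def JrateC [Fintype 𝒳] (Q : 𝒳 → XStar 𝒳 → ℝ)
    (ϖ : (𝒳 × 𝒳) → ℝ) (ν : (𝒳 × XStar 𝒳) → ℝ) : ℝ≥0∞ :=
  if Consistent ϖ ν ∧ pi2 ϖ = nu1 ν then relEnt ν (prodQ (nu1 ν) Q) else ⊤

/-- the rate function `K` of Corollary 2.2. -/
noncomputable def Krate (Q : 𝒳 → XStar 𝒳 → ℝ) (ν : (𝒳 × XStar 𝒳) → ℝ) : ℝ≥0∞ :=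
  if ∀ b : 𝒳, (∑' p : 𝒳 × XStar 𝒳, (mult b p.2 : ℝ) * ν p) ≤ nu1 ν b then
    relEnt ν (prodQ (nu1 ν) Q)
  else ⊤

/-- the rate function `J̃`, defined on sub-consistent pairs. -/
noncomputable def Jtilde [Fintype 𝒳] (Q : 𝒳 → XStar 𝒳 → ℝ)
    (ϖ : (𝒳 × 𝒳) → ℝ) (ν : (𝒳 × XStar 𝒳) → ℝ) : ℝ≥0∞ :=
  if pi2 ϖ = nu1 ν then relEnt ν (prodQ (nu1 ν) Q) else ⊤

/-! ### Events -/

/-- the event `{(L̃_X, M_X) ∈ F}` for `F` a set of pairs of measures. -/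
def evPairOff (F : Set (↥(Mpair 𝒳) × ↥(Mstar 𝒳))) : Set (TypedTree 𝒳) :=
  {t | ∃ x ∈ F, x.1.1 = LtX t ∧ x.2.1 = MX t}

/-- the event `{(L̃_X, M_X) ∈ F}` for `F` a set of pairs with second component in `ℳ(𝒳×𝒳_k*)`. -/
def evPairOffK (k : ℕ) (F : Set (↥(Mpair 𝒳) × ↥(MstarK 𝒳 k))) : Set (TypedTree 𝒳) :=
  {t | ∃ x ∈ F, x.1.1 = LtX t ∧ x.2.1 = MX t}

/-- the event `{M_X ∈ F}`. -/
def evOff (F : Set ↥(Mstar 𝒳)) : Set (TypedTree 𝒳) := {t | ∃ x ∈ F, x.1 = MX t}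

/-- the event `{L_X ∈ F}`. -/
def evPair [Fintype 𝒳] (F : Set ↥(Mprob2 𝒳)) : Set (TypedTree 𝒳) := {t | ∃ x ∈ F, x.1 = LX t}

/-- `ℳ_s`, the (closed) set of sub-consistent pairs, as a subspace. -/
def Msub (𝒳 : Type) : Set (↥(Mpair 𝒳) × ↥(Mstar 𝒳)) := {x | SubConsistent x.1.1 x.2.1}

/-- `ℳ_{c,k}`, the (closed) set of consistent pairs, as a subspace. -/
def MsubK (𝒳 : Type) (k : ℕ) : Set (↥(Mpair 𝒳) × ↥(MstarK 𝒳 k)) := {x | Consistent x.1.1 x.2.1}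

/-- the event `{(L̃_X, M_X) ∈ F}` for `F ⊆ ℳ_s`. -/
def evPairOffSub (F : Set ↥(Msub 𝒳)) : Set (TypedTree 𝒳) :=
  {t | ∃ x ∈ F, x.1.1.1 = LtX t ∧ x.1.2.1 = MX t}

/-- the event `{(L̃_X, M_X) ∈ F}` for `F ⊆ ℳ_{c,k}`. -/
def evPairOffSubK (k : ℕ) (F : Set ↥(MsubK 𝒳 k)) : Set (TypedTree 𝒳) :=
  {t | ∃ x ∈ F, x.1.1.1 = LtX t ∧ x.1.2.1 = MX t}

/-! ### Markov chains indexed by Galton-Watson trees -/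

/-- the offspring kernel of a Markov chain with transition kernel `Q` indexed by a
Galton-Watson tree with offspring law `p`: `ℚ{c|b} = p(n) ∏ᵢ Q{aᵢ|b}`. -/
noncomputable def mcKernel (p : ℕ → ℝ) (Q : 𝒳 → 𝒳 → ℝ) : 𝒳 → XStar 𝒳 → ℝ :=
  fun b c => p c.1 * ∏ i : Fin c.1, Q b (c.2 i)

/-- irreducibility of a Markovian transition kernel on `𝒳`. -/
def IrreducibleKernel [Fintype 𝒳] [DecidableEq 𝒳] (Q : 𝒳 → 𝒳 → ℝ) : Prop :=
  ∀ a b : 𝒳, ∃ n : ℕ, 0 < ((Matrix.of Q) ^ (n + 1)) a b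

/-- first marginal of a measure on `𝒳 × 𝒳`. -/
noncomputable def mu1m [Fintype 𝒳] (μ : (𝒳 × 𝒳) → ℝ) : 𝒳 → ℝ := fun a => ∑ b : 𝒳, μ (a, b)

/-- second marginal of a measure on `𝒳 × 𝒳`. -/
noncomputable def mu2m [Fintype 𝒳] (μ : (𝒳 × 𝒳) → ℝ) : 𝒳 → ℝ := fun b => ∑ a : 𝒳, μ (a, b)

/-- the Cramér transform `I_p(x) = sup_λ {λx - log Σₙ p(n) e^{λn}}` of an offspring law,
as an element of `[0,∞]` (the log-moment generating function being `+∞`,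
i.e. the bracket being `-∞`, where the series diverges). -/
noncomputable def Ip (p : ℕ → ℝ) (x : ℝ) : ℝ≥0∞ :=
  ⨆ lam : ℝ,
    if Summable (fun n : ℕ => p n * Real.exp (lam * n)) then
      ENNReal.ofReal (lam * x - Real.log (∑' n : ℕ, p n * Real.exp (lam * n)))
    else 0

/-- the log-moment generating function `Λ_p(λ)`, valued in `(-∞, ∞]`. -/
noncomputable def logMgf (p : ℕ → ℝ) (lam : ℝ) : EReal :=
  if Summable (fun n : ℕ => p n * Real.exp (lam * n)) then
    ((Real.log (∑' n : ℕ, p n * Real.exp (lam * n)) : ℝ) : EReal)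
  else ⊤

/-- the rate function `I` of Theorem 2.5. -/
noncomputable def Irate [Fintype 𝒳] (p : ℕ → ℝ) (Q : 𝒳 → 𝒳 → ℝ) (μ : (𝒳 × 𝒳) → ℝ) : ℝ≥0∞ :=
  if ∀ a : 𝒳, mu2m μ a = 0 → mu1m μ a = 0 then
    relEnt μ (fun q : 𝒳 × 𝒳 => mu1m μ q.1 * Q q.1 q.2)
      + ∑ a : 𝒳, ENNReal.ofReal (mu2m μ a) * Ip p (mu1m μ a / mu2m μ a)
  else ⊤

/-! ### The variational upper-bound functional `Ĵ` -/

/-- bounded functions on `𝒳 × 𝒳*`. -/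
def BddFun {α : Type*} (g : α → ℝ) : Prop := ∃ M : ℝ, ∀ x, |g x| ≤ M

/-- `U_g(a) = log Σ_c e^{g(a,c)} ℚ{c|a}`. -/
noncomputable def Ug (Q : 𝒳 → XStar 𝒳 → ℝ) (g : (𝒳 × XStar 𝒳) → ℝ) (a : 𝒳) : ℝ :=
  Real.log (∑' c : XStar 𝒳, Real.exp (g (a, c)) * Q a c)

/-- `Ĵ(ϖ,ν) = sup_{g bounded} { ∫ g dν - ∫ U_g(b) ϖ(da,db) }`. -/
noncomputable def Jhat [Fintype 𝒳] (Q : 𝒳 → XStar 𝒳 → ℝ)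
    (ϖ : (𝒳 × 𝒳) → ℝ) (ν : (𝒳 × XStar 𝒳) → ℝ) : ℝ≥0∞ :=
  ⨆ (g : (𝒳 × XStar 𝒳) → ℝ) (_ : BddFun g),
    ENNReal.ofReal ((∑' p : 𝒳 × XStar 𝒳, g p * ν p) - ∑ q : 𝒳 × 𝒳, Ug Q g q.2 * ϖ q)

/-! ### Truncation, conditional kernels, total variation -/

/-- `‖ν‖_k = ν(𝒳 × 𝒳_k*)`. -/
noncomputable def normK (k : ℕ) (ν : (𝒳 × XStar 𝒳) → ℝ) : ℝ :=
  ∑' p : 𝒳 × XStar 𝒳, if p.2.1 ≤ k then ν p else 0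

/-- `ν_k`, the normalised restriction of `ν` to `𝒳 × 𝒳_k*`. -/
noncomputable def restrictK (k : ℕ) (ν : (𝒳 × XStar 𝒳) → ℝ) : (𝒳 × XStar 𝒳) → ℝ :=
  fun p => if p.2.1 ≤ k then ν p / normK k ν else 0

/-- `ℚ{𝒳_k* | a}`. -/
noncomputable def QmassK (Q : 𝒳 → XStar 𝒳 → ℝ) (k : ℕ) (a : 𝒳) : ℝ :=
  ∑' c : XStar 𝒳, if c.1 ≤ k then Q a c else 0

/-- the conditional offspring kernel `ℚ_k{c|a} = ℚ{c|a} / ℚ{𝒳_k*|a}` on `𝒳_k*`. -/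
noncomputable def Qcond (Q : 𝒳 → XStar 𝒳 → ℝ) (k : ℕ) : 𝒳 → XStar 𝒳 → ℝ :=
  fun a c => if c.1 ≤ k then Q a c / QmassK Q k a else 0

/-- `ϖ_k(a,b) = Σ_{c ∈ 𝒳_k*} m(b,c) ν_k(a,c)`. -/
noncomputable def piK (k : ℕ) (ν : (𝒳 × XStar 𝒳) → ℝ) : (𝒳 × 𝒳) → ℝ :=
  fun q => ∑' c : XStar 𝒳, (mult q.2 c : ℝ) * restrictK k ν (q.1, c)

/-- the total variation metric `d(ν,ν̃) = (1/2) Σ |ν - ν̃|`. -/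
noncomputable def tvDist {α : Type*} (ν ν' : α → ℝ) : ℝ := (1 / 2) * ∑' x, |ν x - ν' x|

/-- the pairing `⟨f, ν⟩ = Σ f dν`, valued in `[-∞,∞]`
(defined as the difference of the positive and negative parts). -/
noncomputable def pairE {α : Type*} (f ν : α → ℝ) : EReal :=
  ((∑' x, ENNReal.ofReal (f x * ν x) : ℝ≥0∞) : EReal)
    - ((∑' x, ENNReal.ofReal (-(f x * ν x)) : ℝ≥0∞) : EReal)

/-- `f^{(0,q]} = 1_{ν₁⊗ℚ ≥ ν > 0} log (ν / ν₁⊗ℚ)`. -/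
noncomputable def f0q (Q : 𝒳 → XStar 𝒳 → ℝ) (ν : (𝒳 × XStar 𝒳) → ℝ) : (𝒳 × XStar 𝒳) → ℝ :=
  fun p => if 0 < ν p ∧ ν p ≤ prodQ (nu1 ν) Q p then Real.log (ν p / prodQ (nu1 ν) Q p) else 0

/-- `f^{(q,1]} = 1_{1 ≥ ν > ν₁⊗ℚ} log (ν / ν₁⊗ℚ)`. -/
noncomputable def fq1 (Q : 𝒳 → XStar 𝒳 → ℝ) (ν : (𝒳 × XStar 𝒳) → ℝ) : (𝒳 × XStar 𝒳) → ℝ :=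
  fun p => if prodQ (nu1 ν) Q p < ν p ∧ ν p ≤ 1 then Real.log (ν p / prodQ (nu1 ν) Q p) else 0

/-- `f_k = 1_{ν_k > 0} log (ν_k / (ν_k)₁⊗ℚ_k)`. -/
noncomputable def fres (Q : 𝒳 → XStar 𝒳 → ℝ) (k : ℕ) (ν : (𝒳 × XStar 𝒳) → ℝ) :
    (𝒳 × XStar 𝒳) → ℝ :=
  fun p => if 0 < restrictK k ν p then
    Real.log (restrictK k ν p / prodQ (nu1 (restrictK k ν)) (Qcond Q k) p) else 0

/-! ### Product laws on `𝒳*` and on `𝒳ⁿ` -/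

/-- the offspring law `q(c) = p(n) ∏ᵢ q̂(aᵢ)` on `𝒳*`. -/
noncomputable def qProd (p : ℕ → ℝ) (qhat : 𝒳 → ℝ) : XStar 𝒳 → ℝ :=
  fun c => p c.1 * ∏ i : Fin c.1, qhat (c.2 i)

/-- the product measure `q̂ⁿ` on `𝒳ⁿ`. -/
noncomputable def prodM (qhat : 𝒳 → ℝ) (n : ℕ) : (Fin n → 𝒳) → ℝ := fun y => ∏ i, qhat (y i)

/-- the `i`-th marginal `v_{n,i}` of a measure on `𝒳ⁿ`. -/
noncomputable def marginal [Fintype 𝒳] {n : ℕ} (v : (Fin n → 𝒳) → ℝ) (i : Fin n) : 𝒳 → ℝ :=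
  fun b => ∑ y : Fin n → 𝒳, if y i = b then v y else 0

/-- the tilted law `s_λ(n) = p(n) e^{λn - Λ_p(λ)}`. -/
noncomputable def tilted (p : ℕ → ℝ) (lam : ℝ) : ℕ → ℝ :=
  fun n => p n * Real.exp (lam * n - Real.log (∑' m : ℕ, p m * Real.exp (lam * m)))

/-- `n × M_X[N > B]`: the number of vertices with more than `B` children. -/
noncomputable def bigCount (t : TypedTree 𝒳) (B : ℕ) : ℝ :=
  ∑' p : 𝒳 × XStar 𝒳, if B < p.2.1 then (TypedTree.offCount t p : ℝ) else 0

/-!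
The chain rule `H(v ‖ qⁿ) = Σᵢ H(vᵢ ‖ q) + H(v ‖ ∏ᵢ vᵢ)` gives the first inequality, with
equality when `v` is a product measure. The second is joint convexity of relative entropy (the
log-sum inequality) applied to `z • (ν̄, q̂) = Σₙ Σᵢ s(n) • (v_{n,i}, q̂)`, where `ν̄` is the
averaged marginal. Relative entropy is treated as a sum of the `[0,∞]`-valued perspective
`y klFun (x / y)`, which makes convexity and the infinite cases uniform.
-/

open InformationTheory

/-- The summand `x log (x / y) - x + y` of `relEnt`, written for `y ≠ 0` as the perspective
`y klFun (x / y)` of `klFun`, and extended by `⊤` where absolute continuity fails. -/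
noncomputable def relEntTerm (x y : ℝ) : ℝ≥0∞ :=
  if y = 0 then (if x = 0 then 0 else ⊤) else ENNReal.ofReal (y * klFun (x / y))

@[simp]
lemma relEntTerm_zero_zero : relEntTerm 0 0 = 0 := by simp [relEntTerm]

lemma relEntTerm_of_ne_zero (x : ℝ) {y : ℝ} (hy : y ≠ 0) :
    relEntTerm x y = ENNReal.ofReal (y * klFun (x / y)) := if_neg hy

lemma mul_log_div_sub_add_eq_mul_klFun (x : ℝ) {y : ℝ} (hy : y ≠ 0) :
    x * Real.log (x / y) - x + y = y * klFun (x / y) := by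
  rw [klFun_apply]; field_simp; ring

lemma mul_log_div_sub_add_nonneg {x y : ℝ} (hx : 0 ≤ x) (hy : 0 ≤ y) (hxy : y = 0 → x = 0) :
    0 ≤ x * Real.log (x / y) - x + y := by
  rcases hy.eq_or_lt with rfl | hy
  · simp [hxy rfl]
  · rw [mul_log_div_sub_add_eq_mul_klFun x hy.ne']
    exact mul_nonneg hy.le (klFun_nonneg (div_nonneg hx hy.le))

lemma relEntTerm_self (x : ℝ) : relEntTerm x x = 0 := by
  by_cases hx : x = 0
  · simp [hx]
  · simp [relEntTerm_of_ne_zero x hx, div_self hx, klFun_one]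

lemma relEntTerm_const_mul {c : ℝ} (hc : 0 ≤ c) (x y : ℝ) :
    relEntTerm (c * x) (c * y) = ENNReal.ofReal c * relEntTerm x y := by
  rcases hc.eq_or_lt with rfl | hc
  · simp
  by_cases hy : y = 0
  · by_cases hx : x = 0
    · simp [hx, hy]
    · simp [relEntTerm, hx, hy, hc.ne', ENNReal.mul_top, hc]
  · rw [relEntTerm_of_ne_zero _ (mul_ne_zero hc.ne' hy), relEntTerm_of_ne_zero x hy,
      mul_div_mul_left x y hc.ne', mul_assoc, ENNReal.ofReal_mul hc.le]

lemma mul_klFun_div_add_le {x y X Y : ℝ} (hx : 0 ≤ x) (hy : 0 < y) (hX : 0 ≤ X) (hY : 0 < Y) :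
    (y + Y) * klFun ((x + X) / (y + Y)) ≤ y * klFun (x / y) + Y * klFun (X / Y) := by
  have hyY : 0 < y + Y := by positivity
  have hab : y / (y + Y) + Y / (y + Y) = 1 := by field_simp
  have h := convexOn_klFun.2 (Set.mem_Ici.2 (div_nonneg hx hy.le))
    (Set.mem_Ici.2 (div_nonneg hX hY.le)) (div_nonneg hy.le hyY.le) (div_nonneg hY.le hyY.le) hab
  have hcomb : y / (y + Y) * (x / y) + Y / (y + Y) * (X / Y) = (x + X) / (y + Y) := by
    field_simp
  simp only [smul_eq_mul, hcomb] at h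
  calc (y + Y) * klFun ((x + X) / (y + Y))
      ≤ (y + Y) * (y / (y + Y) * klFun (x / y) + Y / (y + Y) * klFun (X / Y)) :=
        mul_le_mul_of_nonneg_left h hyY.le
    _ = y * klFun (x / y) + Y * klFun (X / Y) := by field_simp

lemma relEntTerm_add_le {x y X Y : ℝ} (hx : 0 ≤ x) (hy : 0 ≤ y) (hX : 0 ≤ X) (hY : 0 ≤ Y) :
    relEntTerm (x + X) (y + Y) ≤ relEntTerm x y + relEntTerm X Y := by
  rcases hy.eq_or_lt with rfl | hy
  · by_cases hx0 : x = 0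
    · simp [hx0]
    · simp [relEntTerm, hx0]
  rcases hY.eq_or_lt with rfl | hY
  · by_cases hX0 : X = 0
    · simp [hX0]
    · simp [relEntTerm, hX0]
  rw [relEntTerm_of_ne_zero _ (by positivity), relEntTerm_of_ne_zero x hy.ne',
    relEntTerm_of_ne_zero X hY.ne',
    ← ENNReal.ofReal_add (mul_nonneg hy.le (klFun_nonneg (div_nonneg hx hy.le)))
      (mul_nonneg hY.le (klFun_nonneg (div_nonneg hX hY.le)))]
  exact ENNReal.ofReal_le_ofReal (mul_klFun_div_add_le hx hy hX hY)

lemma relEntTerm_sum_le {ι : Type*} (t : Finset ι) {a c : ι → ℝ} (ha : ∀ i, 0 ≤ a i)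
    (hc : ∀ i, 0 ≤ c i) :
    relEntTerm (∑ i ∈ t, a i) (∑ i ∈ t, c i) ≤ ∑ i ∈ t, relEntTerm (a i) (c i) := by
  induction t using Finset.induction_on with
  | empty => simp
  | insert j t hj ih =>
    rw [Finset.sum_insert hj, Finset.sum_insert hj, Finset.sum_insert hj]
    exact (relEntTerm_add_le (ha j) (hc j) (Finset.sum_nonneg fun i _ => ha i)
      (Finset.sum_nonneg fun i _ => hc i)).trans (by gcongr)

lemma continuousAt_relEntTerm (x : ℝ) {y : ℝ} (hy : 0 < y) :
    ContinuousAt (fun p : ℝ × ℝ => relEntTerm p.1 p.2) (x, y) := by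
  have hcont : ContinuousAt (fun p : ℝ × ℝ => ENNReal.ofReal (p.2 * klFun (p.1 / p.2))) (x, y) :=
    ENNReal.continuous_ofReal.continuousAt.comp (continuousAt_snd.mul
      (continuous_klFun.continuousAt.comp (continuousAt_fst.div continuousAt_snd hy.ne')))
  refine hcont.congr ?_
  filter_upwards [continuousAt_snd.eventually (lt_mem_nhds hy)] with p hp
  exact (relEntTerm_of_ne_zero p.1 hp.ne').symm

/-- The log-sum inequality for countable families. -/
lemma relEntTerm_le_tsum {ι : Type*} {a c : ι → ℝ} {A C : ℝ} (ha : ∀ i, 0 ≤ a i)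
    (hc : ∀ i, 0 ≤ c i) (hA : HasSum a A) (hC : HasSum c C) :
    relEntTerm A C ≤ ∑' i, relEntTerm (a i) (c i) := by
  by_cases hac : ∀ i, c i = 0 → a i = 0
  swap
  · push Not at hac
    obtain ⟨i, hci, hai⟩ := hac
    calc relEntTerm A C ≤ relEntTerm (a i) (c i) := by simp [relEntTerm, hci, hai]
      _ ≤ _ := ENNReal.le_tsum i
  rcases (hC.nonneg hc).eq_or_lt with rfl | hC0
  · have hc0 : c = 0 := (hasSum_zero_iff_of_nonneg hc).1 hC
    have ha0 : a = 0 := funext fun i => hac i (congr_fun hc0 i)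
    rw [ha0] at hA
    simp [hA.unique hasSum_zero]
  · exact le_of_tendsto' ((continuousAt_relEntTerm A hC0).tendsto.comp (hA.prodMk_nhds hC))
      fun t => (relEntTerm_sum_le t ha hc).trans (ENNReal.sum_le_tsum t)

section RelEnt

variable {α : Type*}

lemma relEnt_eq_tsum_relEntTerm (ν μ : α → ℝ) :
    relEnt ν μ = ∑' x, relEntTerm (ν x) (μ x) := by
  by_cases hac : ∀ x, μ x = 0 → ν x = 0
  · rw [relEnt, if_pos hac]
    refine tsum_congr fun x => ?_
    by_cases hμ : μ x = 0
    · simp [hμ, hac x hμ]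
    · rw [relEntTerm_of_ne_zero _ hμ, mul_log_div_sub_add_eq_mul_klFun _ hμ]
  · rw [relEnt, if_neg hac]
    push Not at hac
    obtain ⟨x, hμ, hν⟩ := hac
    refine (top_le_iff.1 ?_).symm
    calc (⊤ : ℝ≥0∞) = relEntTerm (ν x) (μ x) := by simp [relEntTerm, hμ, hν]
      _ ≤ _ := ENNReal.le_tsum x

lemma relEnt_eq_top {ν μ : α → ℝ} (h : ¬ ∀ x, μ x = 0 → ν x = 0) : relEnt ν μ = ⊤ := if_neg h

lemma relEnt_self (ν : α → ℝ) : relEnt ν ν = 0 := by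
  simp [relEnt_eq_tsum_relEntTerm, relEntTerm_self]

lemma relEnt_const_mul {c : ℝ} (hc : 0 ≤ c) (ν μ : α → ℝ) :
    relEnt (fun x => c * ν x) (fun x => c * μ x) = ENNReal.ofReal c * relEnt ν μ := by
  simp only [relEnt_eq_tsum_relEntTerm, relEntTerm_const_mul hc, ENNReal.tsum_mul_left]

lemma relEnt_le_tsum_of_hasSum {ι : Type*} {ν μ : ι → α → ℝ} {ν' μ' : α → ℝ}
    (hν : ∀ i x, 0 ≤ ν i x) (hμ : ∀ i x, 0 ≤ μ i x)
    (hνs : ∀ x, HasSum (fun i => ν i x) (ν' x)) (hμs : ∀ x, HasSum (fun i => μ i x) (μ' x)) :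
    relEnt ν' μ' ≤ ∑' i, relEnt (ν i) (μ i) := by
  simp only [relEnt_eq_tsum_relEntTerm]
  rw [ENNReal.tsum_comm]
  exact ENNReal.tsum_le_tsum fun x =>
    relEntTerm_le_tsum (fun i => hν i x) (fun i => hμ i x) (hνs x) (hμs x)

variable [Fintype α] {ν μ : α → ℝ}

lemma sum_mul_log_div_eq (hsum : ∑ x, ν x = ∑ x, μ x) :
    ∑ x, ν x * Real.log (ν x / μ x) = ∑ x, (ν x * Real.log (ν x / μ x) - ν x + μ x) := by
  simp [Finset.sum_add_distrib, Finset.sum_sub_distrib, hsum]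

lemma sum_mul_log_div_nonneg (hν : ∀ x, 0 ≤ ν x) (hμ : ∀ x, 0 ≤ μ x)
    (hac : ∀ x, μ x = 0 → ν x = 0) (hsum : ∑ x, ν x = ∑ x, μ x) :
    0 ≤ ∑ x, ν x * Real.log (ν x / μ x) := by
  rw [sum_mul_log_div_eq hsum]
  exact Finset.sum_nonneg fun x _ => mul_log_div_sub_add_nonneg (hν x) (hμ x) (hac x)

lemma relEnt_eq_ofReal_sum_mul_log (hν : ∀ x, 0 ≤ ν x) (hμ : ∀ x, 0 ≤ μ x)
    (hac : ∀ x, μ x = 0 → ν x = 0) (hsum : ∑ x, ν x = ∑ x, μ x) :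
    relEnt ν μ = ENNReal.ofReal (∑ x, ν x * Real.log (ν x / μ x)) := by
  rw [relEnt, if_pos hac, tsum_fintype, sum_mul_log_div_eq hsum,
    ENNReal.ofReal_sum_of_nonneg fun x _ => mul_log_div_sub_add_nonneg (hν x) (hμ x) (hac x)]

end RelEnt

lemma prodM_nonneg {n : ℕ} {q : 𝒳 → ℝ} (hq : ∀ b, 0 ≤ q b) (y : Fin n → 𝒳) : 0 ≤ prodM q n y :=
  Finset.prod_nonneg fun j _ => hq (y j)

section Marginals

variable [Fintype 𝒳] {n : ℕ}

lemma sum_prodM (q : 𝒳 → ℝ) (n : ℕ) : ∑ y, prodM q n y = (∑ b, q b) ^ n := by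
  simp [prodM, ← Fintype.prod_sum]

lemma marginal_nonneg {v : (Fin n → 𝒳) → ℝ} (hv : ∀ y, 0 ≤ v y) (i : Fin n) (b : 𝒳) :
    0 ≤ marginal v i b :=
  Finset.sum_nonneg fun y _ => by split_ifs <;> simp [hv y]

lemma sum_marginal (v : (Fin n → 𝒳) → ℝ) (i : Fin n) : ∑ b, marginal v i b = ∑ y, v y := by
  unfold marginal
  rw [Finset.sum_comm]
  simp

lemma isProbVec_marginal {v : (Fin n → 𝒳) → ℝ} (hv0 : ∀ y, 0 ≤ v y) (hv1 : ∑ y, v y = 1)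
    (i : Fin n) : IsProbVec (marginal v i) :=
  ⟨marginal_nonneg hv0 i, by simpa [sum_marginal, hv1] using hasSum_fintype (marginal v i)⟩

lemma le_marginal {v : (Fin n → 𝒳) → ℝ} (hv : ∀ y, 0 ≤ v y) (i : Fin n) (y : Fin n → 𝒳) :
    v y ≤ marginal v i (y i) := by
  simpa [marginal] using Finset.single_le_sum (f := fun y' => if y' i = y i then v y' else 0)
    (fun y' _ => by split_ifs <;> simp [hv y']) (Finset.mem_univ y)

lemma sum_mul_apply_eq_sum_marginal_mul (v : (Fin n → 𝒳) → ℝ) (i : Fin n) (f : 𝒳 → ℝ) :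
    ∑ y, v y * f (y i) = ∑ b, marginal v i b * f b := by
  simp only [marginal, Finset.sum_mul, ite_mul, zero_mul]
  rw [Finset.sum_comm]
  simp

lemma marginal_prodM {w : 𝒳 → ℝ} (hw : ∑ b, w b = 1) (i : Fin n) : marginal (prodM w n) i = w := by
  funext b
  have hsplit : ∀ y : Fin n → 𝒳, (if y i = b then prodM w n y else 0)
      = ∏ j, w (y j) * (if j = i then (if y j = b then 1 else 0) else 1) := by
    intro y
    rw [Finset.prod_mul_distrib, Finset.prod_ite_eq']
    simp [prodM]
  simp only [marginal, hsplit]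
  rw [← Fintype.prod_sum (fun j x => w x * if j = i then (if x = b then 1 else 0) else 1),
    Finset.prod_eq_single i (fun j _ hj => by simp [hj, hw]) (by simp)]
  simp

noncomputable def prodMarginals (v : (Fin n → 𝒳) → ℝ) : (Fin n → 𝒳) → ℝ :=
  fun y => ∏ j, marginal v j (y j)

lemma sum_prodMarginals {v : (Fin n → 𝒳) → ℝ} (hv1 : ∑ y, v y = 1) :
    ∑ y, prodMarginals v y = 1 := by
  simp [prodMarginals, ← Fintype.prod_sum (fun j b => marginal v j b), sum_marginal, hv1]

lemma mul_log_div_prodM_eq {v : (Fin n → 𝒳) → ℝ} {q : 𝒳 → ℝ} (hv : ∀ y, 0 ≤ v y)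
    {y : Fin n → 𝒳} (hvq : prodM q n y = 0 → v y = 0) :
    v y * Real.log (v y / prodM q n y) = v y * Real.log (v y / prodMarginals v y)
      + ∑ i, v y * Real.log (marginal v i (y i) / q (y i)) := by
  rcases (hv y).eq_or_lt with hvy | hvy
  · simp [← hvy]
  have hqy : prodM q n y ≠ 0 := fun h => hvy.ne' (hvq h)
  have hq : ∀ j, q (y j) ≠ 0 := fun j hj => hqy (Finset.prod_eq_zero (Finset.mem_univ j) hj)
  have hm : ∀ j, marginal v j (y j) ≠ 0 := fun j => (hvy.trans_le (le_marginal hv j y)).ne'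
  simp only [prodM, prodMarginals] at hqy ⊢
  rw [Real.log_div hvy.ne' hqy, Real.log_div hvy.ne' (Finset.prod_ne_zero_iff.2 fun j _ => hm j),
    Real.log_prod fun j _ => hq j, Real.log_prod fun j _ => hm j]
  simp only [Real.log_div (hm _) (hq _), mul_sub, Finset.mul_sum, Finset.sum_sub_distrib]
  ring

lemma sum_mul_log_div_prodM_eq {v : (Fin n → 𝒳) → ℝ} {q : 𝒳 → ℝ} (hv : ∀ y, 0 ≤ v y)
    (hac : ∀ y, prodM q n y = 0 → v y = 0) :
    ∑ y, v y * Real.log (v y / prodM q n y)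
      = ∑ i, ∑ b, marginal v i b * Real.log (marginal v i b / q b)
        + ∑ y, v y * Real.log (v y / prodMarginals v y) := by
  simp only [mul_log_div_prodM_eq hv (hac _), Finset.sum_add_distrib]
  rw [Finset.sum_comm, add_comm]
  congr 1
  exact Finset.sum_congr rfl fun i _ =>
    sum_mul_apply_eq_sum_marginal_mul v i fun b => Real.log (marginal v i b / q b)

theorem relEnt_prodM_eq_sum_marginal_add {v : (Fin n → 𝒳) → ℝ} {q : 𝒳 → ℝ}
    (hv0 : ∀ y, 0 ≤ v y) (hv1 : ∑ y, v y = 1) (hq0 : ∀ b, 0 ≤ q b) (hq1 : ∑ b, q b = 1)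
    (hac : ∀ y, prodM q n y = 0 → v y = 0) :
    relEnt v (prodM q n) = ∑ i, relEnt (marginal v i) q + relEnt v (prodMarginals v) := by
  have hmac : ∀ i b, q b = 0 → marginal v i b = 0 := fun i b hb =>
    Finset.sum_eq_zero fun y _ => by
      split_ifs with h
      exacts [hac y (Finset.prod_eq_zero (Finset.mem_univ i) (h ▸ hb)), rfl]
  have hm1 : ∀ i, ∑ b, marginal v i b = ∑ b, q b := fun i => by rw [sum_marginal, hv1, hq1]
  have hPac : ∀ y, prodMarginals v y = 0 → v y = 0 := fun y hy => by
    obtain ⟨j, -, hj⟩ := Finset.prod_eq_zero_iff.1 hy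
    exact le_antisymm (hj ▸ le_marginal hv0 j y) (hv0 y)
  have hP0 : ∀ y, 0 ≤ prodMarginals v y := fun y =>
    Finset.prod_nonneg fun j _ => marginal_nonneg hv0 j (y j)
  have hP1 : ∑ y, v y = ∑ y, prodMarginals v y := by rw [hv1, sum_prodMarginals hv1]
  have hgibbs : ∀ i, 0 ≤ ∑ b, marginal v i b * Real.log (marginal v i b / q b) := fun i =>
    sum_mul_log_div_nonneg (marginal_nonneg hv0 i) hq0 (hmac i) (hm1 i)
  rw [relEnt_eq_ofReal_sum_mul_log hv0 (prodM_nonneg hq0) hac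
      (by rw [hv1, sum_prodM, hq1, one_pow]),
    sum_mul_log_div_prodM_eq hv0 hac,
    ENNReal.ofReal_add (Finset.sum_nonneg fun i _ => hgibbs i)
      (sum_mul_log_div_nonneg hv0 hP0 hPac hP1),
    ENNReal.ofReal_sum_of_nonneg fun i _ => hgibbs i,
    relEnt_eq_ofReal_sum_mul_log hv0 hP0 hPac hP1]
  congr 1
  exact Finset.sum_congr rfl fun i _ =>
    (relEnt_eq_ofReal_sum_mul_log (marginal_nonneg hv0 i) hq0 (hmac i) (hm1 i)).symm

theorem sum_relEnt_marginal_le_relEnt {v : (Fin n → 𝒳) → ℝ} {q : 𝒳 → ℝ}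
    (hv0 : ∀ y, 0 ≤ v y) (hv1 : ∑ y, v y = 1) (hq0 : ∀ b, 0 ≤ q b) (hq1 : ∑ b, q b = 1) :
    ∑ i, relEnt (marginal v i) q ≤ relEnt v (prodM q n) := by
  by_cases hac : ∀ y, prodM q n y = 0 → v y = 0
  · rw [relEnt_prodM_eq_sum_marginal_add hv0 hv1 hq0 hq1 hac]
    exact le_self_add
  · rw [relEnt_eq_top hac]
    exact le_top

theorem relEnt_prodM_prodM {w q : 𝒳 → ℝ} (hw0 : ∀ b, 0 ≤ w b) (hw1 : ∑ b, w b = 1)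
    (hq0 : ∀ b, 0 ≤ q b) (hq1 : ∑ b, q b = 1) :
    relEnt (prodM w n) (prodM q n) = n * relEnt w q := by
  by_cases hac : ∀ y, prodM q n y = 0 → prodM w n y = 0
  · have hprod : prodMarginals (prodM w n) = prodM w n := by
      funext y
      simp [prodMarginals, marginal_prodM hw1, prodM]
    rw [relEnt_prodM_eq_sum_marginal_add (prodM_nonneg hw0)
      (by rw [sum_prodM, hw1, one_pow]) hq0 hq1 hac, hprod, relEnt_self]
    simp [marginal_prodM hw1]
  · rw [relEnt_eq_top hac]
    push Not at hac
    obtain ⟨y, hqy, hwy⟩ := hac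
    obtain ⟨j, -, hj⟩ := Finset.prod_eq_zero_iff.1 hqy
    have hwj : w (y j) ≠ 0 := fun h => hwy (Finset.prod_eq_zero (Finset.mem_univ j) h)
    rw [relEnt_eq_top fun h => hwj (h _ hj), ENNReal.mul_top (by exact_mod_cast j.pos.ne')]

end Marginals

section Mixture

variable {α : Type*} {q : α → ℝ} {s : ℕ → ℝ} {z : ℝ}

lemma ofReal_mul_relEnt_mixture_le {m : (n : ℕ) → Fin n → α → ℝ} (hq : ∀ b, 0 ≤ q b)
    (hs : ∀ n, 0 ≤ s n) (hz : HasSum (fun n : ℕ => (n : ℝ) * s n) z) (hzpos : 0 < z)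
    (hm : ∀ n i, IsProbVec (m n i)) :
    ENNReal.ofReal z * relEnt (fun b => z⁻¹ * ∑' n, s n * ∑ i : Fin n, m n i b) q
      ≤ ∑' n, ENNReal.ofReal (s n) * ∑ i : Fin n, relEnt (m n i) q := by
  have hm1 : ∀ n i b, m n i b ≤ 1 := fun n i b => by
    have h := (hm n i).2
    exact le_hasSum h b fun b' _ => (hm n i).1 b'
  have hterm : ∀ n b, 0 ≤ s n * ∑ i : Fin n, m n i b := fun n b =>
    mul_nonneg (hs n) (Finset.sum_nonneg fun i _ => (hm n i).1 b)
  have hmix : ∀ b, HasSum (fun n => s n * ∑ i : Fin n, m n i b)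
      (∑' n, s n * ∑ i : Fin n, m n i b) := fun b =>
    (hz.summable.of_nonneg_of_le (hterm · b) fun n => by
      rw [mul_comm (n : ℝ)]
      exact mul_le_mul_of_nonneg_left
        (by simpa using Finset.sum_le_sum fun i (_ : i ∈ Finset.univ) => hm1 n i b) (hs n)).hasSum
  have hfiber : ∀ n, relEnt (fun b => s n * ∑ i : Fin n, m n i b) (fun b => n * s n * q b)
      ≤ ∑ i : Fin n, relEnt (fun b => s n * m n i b) (fun b => s n * q b) := fun n => by
    refine (relEnt_le_tsum_of_hasSum (fun i b => mul_nonneg (hs n) ((hm n i).1 b))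
      (fun i b => mul_nonneg (hs n) (hq b)) (fun b => ?_) (fun b => ?_)).trans_eq (tsum_fintype _)
    · simpa [Finset.mul_sum] using hasSum_fintype fun i : Fin n => s n * m n i b
    · simpa [mul_assoc] using hasSum_fintype fun i : Fin n => s n * q b
  calc ENNReal.ofReal z * relEnt (fun b => z⁻¹ * ∑' n, s n * ∑ i : Fin n, m n i b) q
      = relEnt (fun b => ∑' n, s n * ∑ i : Fin n, m n i b) (fun b => z * q b) := by
        rw [← relEnt_const_mul hzpos.le]
        simp only [mul_inv_cancel_left₀ hzpos.ne']
    _ ≤ ∑' n, relEnt (fun b => s n * ∑ i : Fin n, m n i b) (fun b => n * s n * q b) :=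
        relEnt_le_tsum_of_hasSum hterm
          (fun n b => mul_nonneg (mul_nonneg n.cast_nonneg (hs n)) (hq b)) hmix
          fun b => hz.mul_right (q b)
    _ ≤ ∑' n, ∑ i : Fin n, relEnt (fun b => s n * m n i b) (fun b => s n * q b) :=
        ENNReal.tsum_le_tsum hfiber
    _ = ∑' n, ENNReal.ofReal (s n) * ∑ i : Fin n, relEnt (m n i) q := by
        simp only [relEnt_const_mul (hs _), Finset.mul_sum]

lemma ofReal_mul_relEnt_mixture_of_const (hs : ∀ n, 0 ≤ s n)
    (hz : HasSum (fun n : ℕ => (n : ℝ) * s n) z) (hzpos : 0 < z) (w : α → ℝ) :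
    ENNReal.ofReal z * relEnt (fun b => z⁻¹ * ∑' n, s n * ∑ _i : Fin n, w b) q
      = ∑' n, ENNReal.ofReal (s n) * ∑ _i : Fin n, relEnt w q := by
  have hw : (fun b => z⁻¹ * ∑' n, s n * ∑ _i : Fin n, w b) = w := funext fun b => by
    have hsum : ∀ n, s n * ∑ _i : Fin n, w b = n * s n * w b := fun n => by simp; ring
    simp only [hsum, (hz.mul_right (w b)).tsum_eq, inv_mul_cancel_left₀ hzpos.ne']
  have hweights : ∑' n, ENNReal.ofReal (s n) * n = ENNReal.ofReal z := by
    rw [← hz.tsum_eq,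
      ENNReal.ofReal_tsum_of_nonneg (fun n => mul_nonneg n.cast_nonneg (hs n)) hz.summable]
    exact tsum_congr fun n => by
      rw [ENNReal.ofReal_mul (Nat.cast_nonneg n), ENNReal.ofReal_natCast, mul_comm]
  rw [hw]
  simp only [Finset.sum_const, Finset.card_univ, Fintype.card_fin, nsmul_eq_mul, ← mul_assoc,
    ENNReal.tsum_mul_right, hweights]

end Mixture

/-- The chain of entropy inequalities
`Σₙ s(n) H(vₙ ‖ q̂ⁿ) ≥ Σₙ s(n) Σᵢ H(v_{n,i} ‖ q̂) ≥ z H(z⁻¹ Σₙ s(n) Σᵢ v_{n,i} ‖ q̂)`,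
with equality throughout when the `vₙ` are products of a single measure `w`. -/
theorem stmt18 {𝒳 : Type} [Fintype 𝒳] [Nonempty 𝒳]
    (qhat : 𝒳 → ℝ) (s : ℕ → ℝ) (z : ℝ) (v : (n : ℕ) → (Fin n → 𝒳) → ℝ)
    (hq : IsProbVec qhat)
    (hs0 : ∀ n, 0 ≤ s n) (hs1 : HasSum s 1)
    (hz : HasSum (fun n : ℕ => (n : ℝ) * s n) z) (hzpos : 0 < z)
    (hv : ∀ n, (∀ y, 0 ≤ v n y) ∧ ∑ y : Fin n → 𝒳, v n y = 1) :
    (∑' n : ℕ, ENNReal.ofReal (s n) * ∑ i : Fin n, relEnt (marginal (v n) i) qhat)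
        ≤ ∑' n : ℕ, ENNReal.ofReal (s n) * relEnt (v n) (prodM qhat n) ∧
    ENNReal.ofReal z *
        relEnt (fun b : 𝒳 => z⁻¹ * ∑' n : ℕ, s n * ∑ i : Fin n, marginal (v n) i b) qhat
      ≤ ∑' n : ℕ, ENNReal.ofReal (s n) * ∑ i : Fin n, relEnt (marginal (v n) i) qhat ∧
    (∀ w : 𝒳 → ℝ, IsProbVec w → (∀ (n : ℕ) (y : Fin n → 𝒳), v n y = ∏ i, w (y i)) →
      (∑' n : ℕ, ENNReal.ofReal (s n) * relEnt (v n) (prodM qhat n)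
          = ∑' n : ℕ, ENNReal.ofReal (s n) * ∑ i : Fin n, relEnt (marginal (v n) i) qhat) ∧
      (∑' n : ℕ, ENNReal.ofReal (s n) * ∑ i : Fin n, relEnt (marginal (v n) i) qhat
          = ENNReal.ofReal z *
              relEnt (fun b : 𝒳 => z⁻¹ * ∑' n : ℕ, s n * ∑ i : Fin n, marginal (v n) i b)
                qhat)) := by
  have hq1 : ∑ b, qhat b = 1 := (hasSum_fintype qhat).unique hq.2
  refine ⟨ENNReal.tsum_le_tsum fun n => mul_le_mul_right
      (sum_relEnt_marginal_le_relEnt (hv n).1 (hv n).2 hq.1 hq1) _,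
    ofReal_mul_relEnt_mixture_le hq.1 hs0 hz hzpos fun n =>
      isProbVec_marginal (hv n).1 (hv n).2,
    fun w hw hprod => ?_⟩
  have hw1 : ∑ b, w b = 1 := (hasSum_fintype w).unique hw.2
  have hvw : ∀ n, v n = prodM w n := fun n => funext (hprod n)
  simp only [hvw, marginal_prodM hw1]
  refine ⟨tsum_congr fun n => ?_, (ofReal_mul_relEnt_mixture_of_const hs0 hz hzpos w).symm⟩
  simp [relEnt_prodM_prodM hw.1 hw1 hq.1 hq1]

end GWLD
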